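/- arXiv:2401.08219 — 8 statements merged into one kernel-verified Lean document; each statement's English description precedes it below -/
import Mathlib

section
/- If f : R → S is a lattice morphism between prime-unital residuation algebras with a left adjoint f* : S → R, then f satisfies the open-morphism equations f*(e') = e and y \ f(z) = f(f*(y) \ z) for all y ∈ S, z ∈ R, if and only if f is a residuation morphism, i.e. satisfies the Forth condition f(x\z) ≤ f(x)\f(z), the Back condition (for all y, z there exists x with y ≤ f(x) and y\f(z) = f(x\z)), and the Unit condition (e ≤ x ↔ e' ≤ f(x)). -/
/-- For a lattice morphism `f : R → S` between prime-unital residuation algebras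
with a left adjoint `fs`, the open-morphism equations (`fs e' = e` and
`y \ f z = f (fs y \ z)`) hold iff `f` is a residuation morphism, i.e. satisfies
Forth, Back and Unit. -/
theorem stmt_7 {R S : Type*} [DistribLattice R] [BoundedOrder R]
    [DistribLattice S] [BoundedOrder S]
    (ldR rdR : R → R → R) (ldS rdS : S → S → S)
    (hresR : ∀ a b c : R, b ≤ ldR a c ↔ a ≤ rdR c b)
    (hresS : ∀ a b c : S, b ≤ ldS a c ↔ a ≤ rdS c b)
    (e : R) (e' : S)
    (heR : ∀ z : R, ldR e z = z ∧ rdR z e = z)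
    (heS : ∀ z : S, ldS e' z = z ∧ rdS z e' = z)
    (f : R → S)
    (hf_inf : ∀ x y : R, f (x ⊓ y) = f x ⊓ f y)
    (hf_sup : ∀ x y : R, f (x ⊔ y) = f x ⊔ f y)
    (hf_top : f ⊤ = ⊤) (hf_bot : f ⊥ = ⊥)
    (fs : S → R)
    (hadj : ∀ (y : S) (x : R), fs y ≤ x ↔ y ≤ f x) :
    (fs e' = e ∧ ∀ (y : S) (z : R), ldS y (f z) = f (ldR (fs y) z)) ↔
      ((∀ x z : R, f (ldR x z) ≤ ldS (f x) (f z)) ∧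
       (∀ (y : S) (z : R), ∃ x : R, y ≤ f x ∧ ldS y (f z) = f (ldR x z)) ∧
       (∀ x : R, e ≤ x ↔ e' ≤ f x)) := by
  have fmono : ∀ a b : R, a ≤ b → f a ≤ f b := by
    intro a b h
    have h1 : f (a ⊓ b) = f a := by rw [inf_eq_left.2 h]
    rw [hf_inf] at h1
    rw [← h1]; exact inf_le_right
  have antiR : ∀ {a a' : R} (c : R), a' ≤ a → ldR a c ≤ ldR a' c := by
    intro a a' c h
    exact (hresR a' _ c).2 (le_trans h ((hresR a (ldR a c) c).1 le_rfl))
  have antiS : ∀ {a a' : S} (c : S), a' ≤ a → ldS a c ≤ ldS a' c := by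
    intro a a' c h
    exact (hresS a' _ c).2 (le_trans h ((hresS a (ldS a c) c).1 le_rfl))
  have hcou : ∀ y : S, y ≤ f (fs y) := fun y => (hadj y (fs y)).1 le_rfl
  have huni : ∀ x : R, fs (f x) ≤ x := fun x => (hadj (f x) x).2 le_rfl
  constructor
  · rintro ⟨h1, h2⟩
    refine ⟨?_, ?_, ?_⟩
    · intro x z
      rw [h2 (f x) z]
      exact fmono _ _ (antiR z (huni x))
    · intro y z
      exact ⟨fs y, hcou y, h2 y z⟩
    · intro x
      rw [← hadj, h1]
  · rintro ⟨hforth, hback, hunit⟩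
    constructor
    · apply le_antisymm
      · exact (hadj e' e).2 ((hunit e).1 le_rfl)
      · exact (hunit (fs e')).2 (hcou e')
    · intro y z
      apply le_antisymm
      · obtain ⟨x, hyx, heq⟩ := hback y z
        rw [heq]
        exact fmono _ _ (antiR z ((hadj y x).2 hyx))
      · exact le_trans (hforth (fs y) z) (antiS (f z) (hcou y))
end

section
/- In a residuation algebra on a completely distributive algebraic lattice R (a residuation ACDL), the left residual is recovered from the comultiplication γ by x \ z = x ⊸ γ(z), where γ(z) = sup { x ⊗ y | μ(x ⊗ y) ≤ z } and x ⊸ T = sup { y | x ⊗ y ≤ T }. -/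
/-- In a residuation ACDL `R` (with tensor product `T = R ⊗ R`, multiplication
`μ : T → R` adjoint to the residuals, and comultiplication `γ` the right adjoint
of `μ`), the left residual is recovered from the comultiplication by
`x \ z = x ⊸ γ z`, where `x ⊸ T₀ = sSup {y | x ⊗ y ≤ T₀}`. -/
theorem stmt_8 {R T : Type*} [CompleteLattice R] [CompleteLattice T]
    (tensor : R → R → T) (μ : T → R) (γ : R → T) (ld : R → R → R)
    (hadj : ∀ (t : T) (z : R), μ t ≤ z ↔ t ≤ γ z)
    (hres : ∀ x y z : R, μ (tensor x y) ≤ z ↔ y ≤ ld x z) :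
    ∀ x z : R, ld x z = sSup {y : R | tensor x y ≤ γ z} := by
  intro x z
  apply le_antisymm
  · exact le_sSup ((hadj _ _).mp ((hres x (ld x z) z).mpr le_rfl))
  · exact sSup_le fun y hy => (hres x y z).mp ((hadj _ _).mpr hy)
end

section
/- In a residuation ACDL R, the comultiplication satisfies γ(z) = sup_{x ∈ R} x ⊗ (x \ z) = sup_{p ∈ J(R)} p ⊗ (p \ z), where J(R) is the set of completely join-prime elements of R. -/
/-- An element `p` of a complete lattice is completely join-prime if
`p ≤ sSup A` implies `p ≤ a` for some `a ∈ A`. -/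
def CompletelyJoinPrime {R : Type*} [CompleteLattice R] (p : R) : Prop :=
  ∀ A : Set R, p ≤ sSup A → ∃ a ∈ A, p ≤ a

/-- In a residuation ACDL `R`, the comultiplication satisfies
`γ z = ⨆ x, x ⊗ (x \ z) = ⨆ (p join-prime), p ⊗ (p \ z)`. -/
theorem stmt_9 {R T : Type*} [CompleteLattice R] [CompleteLattice T]
    (tensor : R → R → T) (μ : T → R) (γ : R → T) (ld : R → R → R)
    (hadj : ∀ (t : T) (z : R), μ t ≤ z ↔ t ≤ γ z)
    (hres : ∀ x y z : R, μ (tensor x y) ≤ z ↔ y ≤ ld x z)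
    (hgen : ∀ t : T, t = sSup {s : T | (∃ x y : R, s = tensor x y) ∧ s ≤ t})
    (hμ : ∀ S : Set T, μ (sSup S) = sSup (μ '' S))
    (htsup1 : ∀ (A : Set R) (y : R),
      tensor (sSup A) y = sSup ((fun x => tensor x y) '' A))
    (htsup2 : ∀ (x : R) (A : Set R), tensor x (sSup A) = sSup (tensor x '' A))
    (hJ : ∀ x : R, x = sSup {p : R | CompletelyJoinPrime p ∧ p ≤ x}) :
    ∀ z : R,
      (γ z = ⨆ x : R, tensor x (ld x z)) ∧
      γ z = sSup {t : T | ∃ p : R, CompletelyJoinPrime p ∧ t = tensor p (ld p z)} := by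

  have tmono2 : ∀ (x : R) {a b : R}, a ≤ b → tensor x a ≤ tensor x b := by
    intro x a b hab
    have h := htsup2 x {a, b}
    have hb : sSup ({a, b} : Set R) = b := by
      rw [sSup_insert, sSup_singleton, sup_eq_right.mpr hab]
    rw [hb] at h
    rw [h]
    exact le_sSup ⟨a, by simp, rfl⟩
  have tmono1 : ∀ {a b : R} (y : R), a ≤ b → tensor a y ≤ tensor b y := by
    intro a b y hab
    have h := htsup1 {a, b} y
    have hb : sSup ({a, b} : Set R) = b := by
      rw [sSup_insert, sSup_singleton, sup_eq_right.mpr hab]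
    rw [hb] at h
    rw [h]
    exact le_sSup ⟨a, by simp, rfl⟩
  have μmono : ∀ {a b : T}, a ≤ b → μ a ≤ μ b := by
    intro a b hab
    have h := hμ {a, b}
    have hb : sSup ({a, b} : Set T) = b := by
      rw [sSup_insert, sSup_singleton, sup_eq_right.mpr hab]
    rw [hb] at h
    rw [h]
    exact le_sSup ⟨a, by simp, rfl⟩
  intro z
  have hle : ∀ x : R, tensor x (ld x z) ≤ γ z := fun x =>
    (hadj _ z).mp ((hres x (ld x z) z).mpr le_rfl)
  have h1 : γ z = ⨆ x : R, tensor x (ld x z) := by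
    apply le_antisymm
    · conv_lhs => rw [hgen (γ z)]
      apply sSup_le
      rintro s ⟨⟨x, y, rfl⟩, hs⟩
      have hy : y ≤ ld x z := (hres x y z).mp ((hadj _ z).mpr hs)
      exact le_trans (tmono2 x hy) (le_iSup (fun x => tensor x (ld x z)) x)
    · exact iSup_le hle
  refine ⟨h1, ?_⟩
  apply le_antisymm
  · rw [h1]
    apply iSup_le
    intro x
    have hx : tensor x (ld x z) =
        sSup ((fun p => tensor p (ld x z)) '' {p : R | CompletelyJoinPrime p ∧ p ≤ x}) := by
      have h := htsup1 {p : R | CompletelyJoinPrime p ∧ p ≤ x} (ld x z)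
      rw [← hJ x] at h
      exact h
    rw [hx]
    apply sSup_le
    rintro s ⟨p, ⟨hp, hpx⟩, rfl⟩
    have h2 : ld x z ≤ ld p z :=
      (hres p (ld x z) z).mp
        (le_trans (μmono (tmono1 _ hpx)) ((hres x (ld x z) z).mpr le_rfl))
    exact le_trans (tmono2 p h2) (le_sSup ⟨p, hp, rfl⟩)
  · apply sSup_le
    rintro t ⟨p, hp, rfl⟩
    exact hle p
end

section
/- For a residuation ACDL R, the residuals are associative (x \ (z / y) = (x \ z) / y for all x, y, z) if and only if the multiplication μ is associative, i.e. μ(μ(x ⊗ y) ⊗ z) = μ(x ⊗ μ(y ⊗ z)); moreover R has a unit e for the residuals (e\z = z = z/e) iff e is a unit for μ (μ(e ⊗ -) = id = μ(- ⊗ e)). -/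
/-- For a residuation ACDL `R` with multiplication `μ` determined by the
adjunctions `μ(x ⊗ -) ⊣ (x \ -)` and `μ(- ⊗ y) ⊣ (- / y)`: the residuals are
associative iff `μ` is associative, and `e` is a unit for the residuals iff `e`
is a unit for `μ`. -/
theorem stmt_12 {R T : Type*} [CompleteLattice R] [CompleteLattice T]
    (tensor : R → R → T) (μ : T → R) (ld rd : R → R → R)
    (hld : ∀ x y z : R, μ (tensor x y) ≤ z ↔ y ≤ ld x z)
    (hrd : ∀ x y z : R, μ (tensor x y) ≤ z ↔ x ≤ rd z y) :
    ((∀ x y z : R, ld x (rd z y) = rd (ld x z) y) ↔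
      (∀ x y z : R,
        μ (tensor (μ (tensor x y)) z) = μ (tensor x (μ (tensor y z))))) ∧
    (∀ e : R, (∀ z : R, ld e z = z ∧ rd z e = z) ↔
      (∀ x : R, μ (tensor e x) = x ∧ μ (tensor x e) = x)) := by
  have key : ∀ x y z w : R,
      (μ (tensor (μ (tensor x y)) z) ≤ w ↔ y ≤ ld x (rd w z)) ∧
      (μ (tensor x (μ (tensor y z))) ≤ w ↔ y ≤ rd (ld x w) z) := by
    intro x y z w
    constructor
    · rw [hrd, ← hld, hld]
    · rw [hld, ← hrd, hrd]
  constructor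
  · constructor
    · intro h x y z
      apply eq_of_forall_ge_iff
      intro w
      rw [(key x y z w).1, (key x y z w).2, h]
    · intro h x y z
      apply eq_of_forall_le_iff
      intro y'
      rw [← (key x y' y z).1, ← (key x y' y z).2, h]
  · intro e
    constructor
    · intro h x
      constructor
      · apply eq_of_forall_ge_iff
        intro w
        rw [hld, (h w).1]
      · apply eq_of_forall_ge_iff
        intro w
        rw [hrd, (h w).2]
    · intro h z
      constructor
      · apply eq_of_forall_le_iff
        intro x
        rw [← hld, (h x).1]
      · apply eq_of_forall_le_iff
        intro x
        rw [← hrd, (h x).2]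
end

section
/- In a locally finite residuation algebra whose finite residuation ideals are all pure, the residuals are join-preserving at primes: for every prime filter F on R, every a ∈ F, and all b, c ∈ R, there exists a' ∈ F such that a \ (b ∨ c) ≤ (a' \ b) ∨ (a' \ c). -/
open Classical in
/-- In a finite sup-closed set, below any element of a prime filter there is a
join-irreducible (in the set) element of the filter. -/
private lemma aux13 {R : Type*} [DistribLattice R] (I : Set R) (hfin : I.Finite)
    (hsup : ∀ x ∈ I, ∀ y ∈ I, x ⊔ y ∈ I) (F : Set R)
    (hF_prime : ∀ x y : R, x ⊔ y ∈ F → x ∈ F ∨ y ∈ F) :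
    ∀ n : ℕ, ∀ a ∈ I, a ∈ F → (hfin.toFinset.filter (· < a)).card ≤ n →
      ∃ p ∈ I, p ∈ F ∧ p ≤ a ∧ ∀ u ∈ I, ∀ v ∈ I, p = u ⊔ v → p = u ∨ p = v := by
  intro n
  induction n with
  | zero =>
    intro a haI haF hcard
    by_cases hirr : ∀ u ∈ I, ∀ v ∈ I, a = u ⊔ v → a = u ∨ a = v
    · exact ⟨a, haI, haF, le_refl a, hirr⟩
    · push_neg at hirr
      obtain ⟨u, huI, v, hvI, heq, hau, hav⟩ := hirr
      have hult : u < a := lt_of_le_of_ne (heq ▸ le_sup_left) (Ne.symm hau)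
      have : u ∈ hfin.toFinset.filter (· < a) := by
        simp [Set.Finite.mem_toFinset, huI, hult]
      have := Finset.card_pos.mpr ⟨u, this⟩
      omega
  | succ n ih =>
    intro a haI haF hcard
    by_cases hirr : ∀ u ∈ I, ∀ v ∈ I, a = u ⊔ v → a = u ∨ a = v
    · exact ⟨a, haI, haF, le_refl a, hirr⟩
    · push_neg at hirr
      obtain ⟨u, huI, v, hvI, heq, hau, hav⟩ := hirr
      have hult : u < a := lt_of_le_of_ne (heq ▸ le_sup_left) (Ne.symm hau)
      have hvlt : v < a := lt_of_le_of_ne (heq ▸ le_sup_right) (Ne.symm hav)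
      have key : ∀ w : R, w ∈ I → w < a →
          (hfin.toFinset.filter (· < w)).card ≤ n := by
        intro w hwI hwlt
        have hss : hfin.toFinset.filter (· < w) ⊂ hfin.toFinset.filter (· < a) := by
          constructor
          · intro x hx
            simp only [Finset.mem_filter, Set.Finite.mem_toFinset] at hx ⊢
            exact ⟨hx.1, lt_trans hx.2 hwlt⟩
          · intro hsub
            have : w ∈ hfin.toFinset.filter (· < w) := by
              apply hsub
              simp [Set.Finite.mem_toFinset, hwI, hwlt]
            simp at this
        have := Finset.card_lt_card hss
        omega
      have huvF : u ⊔ v ∈ F := heq ▸ haF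
      rcases hF_prime u v huvF with hF' | hF'
      · obtain ⟨p, hpI, hpF, hple, hpirr⟩ := ih u huI hF' (key u huI hult)
        exact ⟨p, hpI, hpF, le_trans hple hult.le, hpirr⟩
      · obtain ⟨p, hpI, hpF, hple, hpirr⟩ := ih v hvI hF' (key v hvI hvlt)
        exact ⟨p, hpI, hpF, le_trans hple hvlt.le, hpirr⟩

/-- In a locally finite residuation algebra all of whose finite residuation
ideals are pure, the residuals are join-preserving at primes: for every prime
filter `F`, every `a ∈ F` and all `b, c`, there is `a' ∈ F` with
`a \ (b ⊔ c) ≤ (a' \ b) ⊔ (a' \ c)`. -/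
theorem stmt_13 {R : Type*} [DistribLattice R] [BoundedOrder R]
    (ld rd : R → R → R)
    (hres : ∀ a b c : R, b ≤ ld a c ↔ a ≤ rd c b)
    -- local finiteness with pure finite residuation ideals:
    (hlocfin : ∀ F : Finset R, ∃ I : Set R, I.Finite ∧ ↑F ⊆ I ∧
      (∀ x ∈ I, ∀ y ∈ I, x ⊓ y ∈ I ∧ x ⊔ y ∈ I) ∧
      (∀ x ∈ I, ∀ z : R, ld x z ∈ I ∧ rd z x ∈ I) ∧
      (∀ p ∈ I, (∀ x ∈ I, ∀ y ∈ I, p ≤ x ⊔ y → p ≤ x ∨ p ≤ y) →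
        ∀ b ∈ I, ∀ c ∈ I, ld p (b ⊔ c) = ld p b ⊔ ld p c))
    -- F is a prime filter:
    (F : Set R)
    (hF_up : ∀ x ∈ F, ∀ y : R, x ≤ y → y ∈ F)
    (hF_inf : ∀ x ∈ F, ∀ y ∈ F, x ⊓ y ∈ F)
    (hF_top : (⊤ : R) ∈ F)
    (hF_bot : (⊥ : R) ∉ F)
    (hF_prime : ∀ x y : R, x ⊔ y ∈ F → x ∈ F ∨ y ∈ F) :
    ∀ a ∈ F, ∀ b c : R, ∃ a' ∈ F, ld a (b ⊔ c) ≤ ld a' b ⊔ ld a' c := by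
  classical
  intro a haF b c
  obtain ⟨I, hfin, hsub, hlat, _hder, hpure⟩ := hlocfin {a, b, c}
  have haI : a ∈ I := hsub (by simp)
  have hbI : b ∈ I := hsub (by simp)
  have hcI : c ∈ I := hsub (by simp)
  have hsup : ∀ x ∈ I, ∀ y ∈ I, x ⊔ y ∈ I := fun x hx y hy => (hlat x hx y hy).2
  obtain ⟨p, hpI, hpF, hpa, hpirr⟩ :=
    aux13 I hfin hsup F hF_prime (hfin.toFinset.filter (· < a)).card a haI haF le_rfl
  -- join-irreducible implies prime within I (using distributivity and inf-closure)
  have hprime : ∀ x ∈ I, ∀ y ∈ I, p ≤ x ⊔ y → p ≤ x ∨ p ≤ y := by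
    intro x hx y hy hle
    have h1 : p = (p ⊓ x) ⊔ (p ⊓ y) := by
      rw [← inf_sup_left, inf_eq_left.mpr hle]
    rcases hpirr (p ⊓ x) (hlat p hpI x hx).1 (p ⊓ y) (hlat p hpI y hy).1 h1 with h | h
    · exact Or.inl (h ▸ inf_le_right)
    · exact Or.inr (h ▸ inf_le_right)
  have heq : ld p (b ⊔ c) = ld p b ⊔ ld p c := hpure p hpI hprime b hbI c hcI
  refine ⟨p, hpF, ?_⟩
  rw [← heq]
  -- ld is antitone in the first argument
  have ha' : a ≤ rd (b ⊔ c) (ld a (b ⊔ c)) := (hres a (ld a (b ⊔ c)) (b ⊔ c)).mp le_rfl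
  exact (hres p (ld a (b ⊔ c)) (b ⊔ c)).mpr (le_trans hpa ha')
end

section
/- Ordered monoid quotients of an ordered monoid A are in bijective correspondence with stable preorders on A, where a stable preorder is a preorder ⊑ containing the order ≤ of A and making multiplication monotone (a ⊑ b and a' ⊑ b' imply aa' ⊑ bb'). -/
universe u

/-- A stable preorder on an ordered monoid: a transitive relation containing
the order and compatible with multiplication. (Reflexivity follows from
containing `≤`.) -/
def IsStablePreorder {A : Type u} [Monoid A] [PartialOrder A]
    (r : A → A → Prop) : Prop :=
  Transitive r ∧ (∀ a b : A, a ≤ b → r a b) ∧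
    ∀ a b a' b' : A, r a b → r a' b' → r (a * a') (b * b')

/-- An ordered monoid quotient of `A`: an ordered monoid together with a
surjective monotone monoid homomorphism from `A`. -/
structure OrderedMonoidQuotient (A : Type u) [Monoid A] [PartialOrder A] :
    Type (u + 1) where
  carrier : Type u
  [mon : Monoid carrier]
  [ord : PartialOrder carrier]
  mulMono : ∀ a b c d : carrier, a ≤ b → c ≤ d → a * c ≤ b * d
  e : A →* carrier
  surj : Function.Surjective e
  mono : Monotone (e : A → carrier)

attribute [instance] OrderedMonoidQuotient.mon OrderedMonoidQuotient.ord

section Aux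

variable {A : Type u} [Monoid A] [PartialOrder A]

variable (r : A → A → Prop) (h : IsStablePreorder r)
include h

private lemma rrefl (a : A) : r a a := h.2.1 a a le_rfl

/-- Setoid from a stable preorder. -/
def stableSetoid : Setoid A where
  r a b := r a b ∧ r b a
  iseqv := ⟨fun a => ⟨rrefl r h a, rrefl r h a⟩, fun hx => ⟨hx.2, hx.1⟩,
    fun hx hy => ⟨h.1 hx.1 hy.1, h.1 hy.2 hx.2⟩⟩

/-- Quotient carrier. -/
def QuotC : Type u := Quotient (stableSetoid r h)

instance quotMonoid : Monoid (QuotC r h) where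
  mul := Quotient.map₂ (· * ·) (fun a a' ha b b' hb =>
    ⟨h.2.2 _ _ _ _ ha.1 hb.1, h.2.2 _ _ _ _ ha.2 hb.2⟩)
  one := Quotient.mk _ 1
  mul_assoc a b c := by
    induction a using Quotient.inductionOn
    induction b using Quotient.inductionOn
    induction c using Quotient.inductionOn
    exact congrArg (Quotient.mk _) (mul_assoc _ _ _)
  one_mul a := by
    induction a using Quotient.inductionOn
    exact congrArg (Quotient.mk _) (one_mul _)
  mul_one a := by
    induction a using Quotient.inductionOn
    exact congrArg (Quotient.mk _) (mul_one _)

instance quotOrd : PartialOrder (QuotC r h) where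
  le := Quotient.lift₂ r (fun a b a' b' ha hb => propext
    ⟨fun hr => h.1 (h.1 ha.2 hr) hb.1, fun hr => h.1 (h.1 ha.1 hr) hb.2⟩)
  le_refl a := by
    induction a using Quotient.inductionOn
    exact rrefl r h _
  le_trans a b c := by
    induction a using Quotient.inductionOn
    induction b using Quotient.inductionOn
    induction c using Quotient.inductionOn
    exact fun hx hy => h.1 hx hy
  le_antisymm a b := by
    induction a using Quotient.inductionOn
    induction b using Quotient.inductionOn
    exact fun hx hy => Quotient.sound ⟨hx, hy⟩

/-- Quotient from a stable preorder. -/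
def quotOfStable : OrderedMonoidQuotient A where
  carrier := QuotC r h
  mon := quotMonoid r h
  ord := quotOrd r h
  mulMono a b c d := by
    induction a using Quotient.inductionOn
    induction b using Quotient.inductionOn
    induction c using Quotient.inductionOn
    induction d using Quotient.inductionOn
    exact fun hx hy => h.2.2 _ _ _ _ hx hy
  e := { toFun := Quotient.mk _, map_one' := rfl, map_mul' := fun _ _ => rfl }
  surj := Quotient.exists_rep
  mono := fun a b hab => h.2.1 a b hab

lemma quotOfStable_spec (a b : A) : r a b ↔ (quotOfStable r h).e a ≤ (quotOfStable r h).e b :=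
  Iff.rfl

end Aux

/-- Ordered monoid quotients of an ordered monoid `A` are in bijective
correspondence (up to isomorphism of the codomain) with stable preorders on
`A`, via `q ↦ (a ⊑ b ↔ q.e a ≤ q.e b)`. -/
theorem stmt_14 (A : Type u) [Monoid A] [PartialOrder A]
    (hA : ∀ a b c d : A, a ≤ b → c ≤ d → a * c ≤ b * d) :
    (∀ q : OrderedMonoidQuotient A,
      IsStablePreorder (fun a b : A => q.e a ≤ q.e b)) ∧
    (∀ r : A → A → Prop, IsStablePreorder r →
      ∃ q : OrderedMonoidQuotient A, ∀ a b : A, r a b ↔ q.e a ≤ q.e b) ∧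
    (∀ q₁ q₂ : OrderedMonoidQuotient A,
      (∀ a b : A, q₁.e a ≤ q₁.e b ↔ q₂.e a ≤ q₂.e b) ↔
        ∃ φ : q₁.carrier ≃* q₂.carrier,
          (∀ x y : q₁.carrier, x ≤ y ↔ φ x ≤ φ y) ∧
          ∀ a : A, φ (q₁.e a) = q₂.e a) := by
  refine ⟨fun q => ⟨fun a b c hx hy => le_trans hx hy,
      fun a b hab => q.mono hab,
      fun a b a' b' hx hy => by
        simpa [map_mul] using q.mulMono _ _ _ _ hx hy⟩, ?_, ?_⟩
  · exact fun r hr => ⟨quotOfStable r hr, quotOfStable_spec r hr⟩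
  · intro q₁ q₂
    constructor
    · intro hle
      have heq : ∀ a b : A, q₁.e a = q₁.e b ↔ q₂.e a = q₂.e b := by
        intro a b
        constructor
        · intro hx
          exact le_antisymm ((hle a b).1 hx.le) ((hle b a).1 hx.ge)
        · intro hx
          exact le_antisymm ((hle a b).2 hx.le) ((hle b a).2 hx.ge)
      -- build φ
      have rep : ∀ x : q₁.carrier, ∃ a : A, q₁.e a = x := q₁.surj
      choose g hg using rep
      set f : q₁.carrier → q₂.carrier := fun x => q₂.e (g x) with hf
      have key : ∀ (a : A), f (q₁.e a) = q₂.e a := by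
        intro a
        exact (heq (g (q₁.e a)) a).1 (hg _)
      have fmul : ∀ x y : q₁.carrier, f (x * y) = f x * f y := by
        intro x y
        obtain ⟨a, rfl⟩ := q₁.surj x
        obtain ⟨b, rfl⟩ := q₁.surj y
        rw [← map_mul, key, key, key, map_mul]
      have fone : f 1 = 1 := by
        rw [← map_one q₁.e, key, map_one]
      have fbij : Function.Bijective f := by
        constructor
        · intro x y hxy
          obtain ⟨a, rfl⟩ := q₁.surj x
          obtain ⟨b, rfl⟩ := q₁.surj y
          rw [key, key] at hxy
          exact (heq a b).2 hxy
        · intro z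
          obtain ⟨a, rfl⟩ := q₂.surj z
          exact ⟨q₁.e a, key a⟩
      refine ⟨{ Equiv.ofBijective f fbij with map_mul' := fmul }, ?_, key⟩
      intro x y
      obtain ⟨a, rfl⟩ := q₁.surj x
      obtain ⟨b, rfl⟩ := q₁.surj y
      show _ ↔ f _ ≤ f _
      rw [key, key]
      exact hle a b
    · rintro ⟨φ, hφord, hφe⟩ a b
      rw [hφord (q₁.e a) (q₁.e b), hφe, hφe]
end

section
/- In a compact ordered topological monoid X (Priestley monoid) with elements x ≰ y, if there exists a continuous monotone surjection e onto a finite discrete poset separating x and y, then the relation x ⪯ y defined by 'for all u, v ∈ X, e(uxv) ≤ e(uyv)' is a stable preorder on X refining the order. -/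
/-- In a Priestley (compact ordered topological) monoid `X` with `x ≰ y`, given
a continuous monotone surjection `e` onto a finite discrete poset separating
`x` and `y`, the relation `a ⪯ b ↔ ∀ u v, e (u*a*v) ≤ e (u*b*v)` is a stable
preorder on `X` refining the order: it contains `≤`, is transitive, and is
compatible with multiplication. -/
theorem stmt_15 {X : Type*} [Monoid X] [PartialOrder X]
    [TopologicalSpace X] [CompactSpace X]
    (hmul_mono : ∀ a b c d : X, a ≤ b → c ≤ d → a * c ≤ b * d)
    (hmul_cont : Continuous fun p : X × X => p.1 * p.2)
    {A : Type*} [PartialOrder A] [Fintype A]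
    [TopologicalSpace A] [DiscreteTopology A]
    (e : X → A) (hcont : Continuous e) (hmono : Monotone e)
    (hsurj : Function.Surjective e)
    (x y : X) (hxy : ¬ x ≤ y) (hsep : ¬ e x ≤ e y) :
    (∀ a b : X, a ≤ b → ∀ u v : X, e (u * a * v) ≤ e (u * b * v)) ∧
    (∀ a b c : X,
      (∀ u v : X, e (u * a * v) ≤ e (u * b * v)) →
      (∀ u v : X, e (u * b * v) ≤ e (u * c * v)) →
      ∀ u v : X, e (u * a * v) ≤ e (u * c * v)) ∧
    (∀ a b a' b' : X,
      (∀ u v : X, e (u * a * v) ≤ e (u * b * v)) →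
      (∀ u v : X, e (u * a' * v) ≤ e (u * b' * v)) →
      ∀ u v : X, e (u * (a * a') * v) ≤ e (u * (b * b') * v)) := by
  refine ⟨fun a b hab u v => hmono (hmul_mono _ _ _ _ (hmul_mono _ _ _ _ le_rfl hab) le_rfl),
    fun a b c h1 h2 u v => (h1 u v).trans (h2 u v),
    fun a b a' b' h1 h2 u v => ?_⟩
  calc e (u * (a * a') * v) = e (u * a * (a' * v)) := by simp [mul_assoc]
    _ ≤ e (u * b * (a' * v)) := h1 u (a' * v)
    _ = e ((u * b) * a' * v) := by simp [mul_assoc]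
    _ ≤ e ((u * b) * b' * v) := h2 (u * b) v
    _ = e (u * (b * b') * v) := by simp [mul_assoc]
end

section
/- Let (M, ∘, E) be a relational monoid and define on P(M) the operation A^? = { n | ∃ m ∈ A, m ∘ n ≠ ∅ }. Then M is local (x∘y ≠ ∅ and v ∈ y∘z imply x∘v ≠ ∅) if and only if for every A ⊆ M, A^? ∘ M ⊆ A^?, if and only if for every A ⊆ M, A^? \ A^? = M (where B \ C = { n | B ∘ n ⊆ C }). -/
/-- For a subset `A` of a relational monoid, `A^? = {n | ∃ m ∈ A, m ∘ n ≠ ∅}`. -/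
def qOp {M : Type*} (mul : M → M → Set M) (A : Set M) : Set M :=
  {n | ∃ m ∈ A, (mul m n).Nonempty}

/-- A relational monoid `M` is local iff `A^? ∘ M ⊆ A^?` for every `A ⊆ M`, iff
`A^? \ A^? = M` for every `A ⊆ M`. -/
theorem stmt_18 {M : Type*} (mul : M → M → Set M) (E : Set M)
    (hassoc : ∀ x y z : M,
      (⋃ w ∈ mul x y, mul w z) = ⋃ w ∈ mul y z, mul x w)
    (hunit : ∀ x : M,
      (⋃ e ∈ E, mul e x) = {x} ∧ (⋃ e ∈ E, mul x e) = {x}) :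
    ((∀ x y z v : M,
        (mul x y).Nonempty → v ∈ mul y z → (mul x v).Nonempty) ↔
      (∀ A : Set M, ∀ y ∈ qOp mul A, ∀ z : M, mul y z ⊆ qOp mul A)) ∧
    ((∀ x y z v : M,
        (mul x y).Nonempty → v ∈ mul y z → (mul x v).Nonempty) ↔
      (∀ A : Set M,
        {n | ∀ m ∈ qOp mul A, mul m n ⊆ qOp mul A} = Set.univ)) := by
  constructor
  · constructor
    · rintro hloc A y ⟨m, hm, hmy⟩ z v hv
      exact ⟨m, hm, hloc m y z v hmy hv⟩
    · intro h x y z v hxy hv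
      obtain ⟨m, hm, hmv⟩ := h {x} y ⟨x, rfl, hxy⟩ z hv
      rw [Set.mem_singleton_iff] at hm; subst hm; exact hmv
  · constructor
    · rintro hloc A
      ext n
      simp only [Set.mem_setOf_eq, Set.mem_univ, iff_true]
      rintro m ⟨a, ha, ham⟩ v hv
      exact ⟨a, ha, hloc a m n v ham hv⟩
    · intro h x y z v hxy hv
      have := h {x}
      have hz : z ∈ {n | ∀ m ∈ qOp mul {x}, mul m n ⊆ qOp mul {x}} := by
        rw [this]; trivial
      obtain ⟨m, hm, hmv⟩ := hz y ⟨x, rfl, hxy⟩ hv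
      rw [Set.mem_singleton_iff] at hm; subst hm; exact hmv
end
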